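/- Let a, b be integers and d ≥ 1 an integer. Suppose there exists an integer m ≥ 2 coprime to a² − 5b² such that for every k with 0 ≤ k < π(m), there is no integer z with a·u_k + b·v_k ≡ z^d (mod m). Then for every n ≥ 0, a·uₙ + b·vₙ is not a perfect d-th power, i.e., there is no integer x with a·uₙ + b·vₙ = x^d. -/
import Mathlib

/-- The Fibonacci numbers as integers: `u₀ = 0`, `u₁ = 1`, `u_{n+2} = u_{n+1} + uₙ`. -/
def fibZ (n : ℕ) : ℤ := Nat.fib n

/-- The Lucas numbers: `v₀ = 2`, `v₁ = 1`, `v_{n+2} = v_{n+1} + vₙ`. -/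
def lucasZ : ℕ → ℤ
  | 0 => 2
  | 1 => 1
  | n + 2 => lucasZ (n + 1) + lucasZ n

/-- The Pisano period of `m`: the least `k ≥ 1` such that the Fibonacci sequence
modulo `m` is (purely) periodic with period `k`. -/
noncomputable def pisano (m : ℕ) : ℕ :=
  sInf {k : ℕ | 1 ≤ k ∧ ∀ n : ℕ, Nat.fib (n + k) % m = Nat.fib n % m}

/-- The Fibonacci step as a permutation of `ZMod m × ZMod m`. -/
def fibStep (m : ℕ) : Equiv.Perm (ZMod m × ZMod m) where
  toFun p := (p.2, p.1 + p.2)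
  invFun p := (p.2 - p.1, p.1)
  left_inv := by intro p; simp
  right_inv := by intro p; simp

lemma fibStep_pow (m n : ℕ) :
    ((fibStep m) ^ n) (((Nat.fib 0 : ZMod m), (Nat.fib 1 : ZMod m)))
      = ((Nat.fib n : ZMod m), (Nat.fib (n + 1) : ZMod m)) := by
  induction n with
  | zero => simp
  | succ n ih =>
    rw [pow_succ', Equiv.Perm.mul_apply, ih]
    show ((Nat.fib (n+1) : ZMod m), (Nat.fib n : ZMod m) + (Nat.fib (n+1) : ZMod m)) = _
    rw [Nat.fib_add_two]
    push_cast
    ring_nf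

lemma pisano_mem (m : ℕ) (hm : 0 < m) :
    1 ≤ pisano m ∧ ∀ n : ℕ, Nat.fib (n + pisano m) % m = Nat.fib n % m := by
  haveI : NeZero m := ⟨by omega⟩
  have hne : {k : ℕ | 1 ≤ k ∧ ∀ n : ℕ, Nat.fib (n + k) % m = Nat.fib n % m}.Nonempty := by
    refine ⟨orderOf (fibStep m), orderOf_pos _, fun n => ?_⟩
    have h1 : ((fibStep m) ^ (n + orderOf (fibStep m)))
        (((Nat.fib 0 : ZMod m), (Nat.fib 1 : ZMod m)))
        = ((fibStep m) ^ n) (((Nat.fib 0 : ZMod m), (Nat.fib 1 : ZMod m))) := by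
      rw [pow_add, pow_orderOf_eq_one, mul_one]
    rw [fibStep_pow, fibStep_pow] at h1
    have := congrArg Prod.fst h1
    simpa [ZMod.natCast_eq_natCast_iff, Nat.ModEq] using this
  exact Nat.sInf_mem hne

lemma lucasZ_eq : ∀ n : ℕ, lucasZ n = 2 * fibZ (n + 1) - fibZ n := by
  intro n
  induction n using Nat.strong_induction_on with
  | _ n ih =>
    match n with
    | 0 => simp [lucasZ, fibZ]
    | 1 => simp [lucasZ, fibZ]
    | k + 2 =>
      rw [lucasZ, ih (k + 1) (by omega), ih k (by omega)]
      unfold fibZ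
      have h3 : Nat.fib (k + 3) = Nat.fib (k + 1) + Nat.fib (k + 2) := Nat.fib_add_two
      have h2 : Nat.fib (k + 2) = Nat.fib k + Nat.fib (k + 1) := Nat.fib_add_two
      rw [h3, h2]
      push_cast
      ring

theorem no_dth_powers_of_congruence_obstruction (a b : ℤ) (d : ℕ) (hd : 1 ≤ d)
    (m : ℕ) (hm : 2 ≤ m) (hcop : Int.gcd (a ^ 2 - 5 * b ^ 2) m = 1)
    (hobstruct : ∀ k < pisano m, ¬ ∃ z : ℤ, a * fibZ k + b * lucasZ k ≡ z ^ d [ZMOD m]) :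
    ∀ n : ℕ, ¬ ∃ x : ℤ, a * fibZ n + b * lucasZ n = x ^ d := by
  intro n ⟨x, hx⟩
  obtain ⟨hπ1, hπ2⟩ := pisano_mem m (by omega)
  set π := pisano m
  -- iterate: fib (r + π * q) ≡ fib r [MOD m]
  have hiter : ∀ q r : ℕ, Nat.fib (r + π * q) % m = Nat.fib r % m := by
    intro q
    induction q with
    | zero => simp
    | succ q ih =>
      intro r
      have : r + π * (q + 1) = (r + π * q) + π := by ring
      rw [this, hπ2, ih]
  set k := n % π with hk
  have hklt : k < π := Nat.mod_lt _ (by omega)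
  have hmd : k + π * (n / π) = n := by rw [hk]; exact Nat.mod_add_div n π
  have hn : n = k + π * (n / π) := hmd.symm
  have hfib : Nat.fib n % m = Nat.fib k % m := by
    conv_lhs => rw [hn]
    exact hiter _ _
  have hfib1 : Nat.fib (n + 1) % m = Nat.fib (k + 1) % m := by
    have : n + 1 = (k + 1) + π * (n / π) := by omega
    rw [this]; exact hiter _ _
  refine hobstruct k hklt ⟨x, ?_⟩
  rw [Int.ModEq] at *
  have hzf : ((Nat.fib n : ZMod m)) = (Nat.fib k : ZMod m) :=
    (ZMod.natCast_eq_natCast_iff _ _ _).2 hfib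
  have hzf1 : ((Nat.fib (n + 1) : ZMod m)) = (Nat.fib (k + 1) : ZMod m) :=
    (ZMod.natCast_eq_natCast_iff _ _ _).2 hfib1
  have key : a * fibZ k + b * lucasZ k ≡ a * fibZ n + b * lucasZ n [ZMOD m] := by
    rw [← ZMod.intCast_eq_intCast_iff]
    rw [lucasZ_eq, lucasZ_eq]
    unfold fibZ
    push_cast
    rw [hzf, hzf1]
  calc a * fibZ k + b * lucasZ k ≡ a * fibZ n + b * lucasZ n [ZMOD m] := key
    _ = x ^ d := hx
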